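/- arXiv:1806.09189 — 3 statements merged into one kernel-verified Lean document; each statement's English description precedes it below -/
import Mathlib

section
/- Let F be a field and ω ∈ F an element of multiplicative order at least ℓ². Let A be an ℓ×n matrix and B an n×ℓ matrix over F such that AB has at most t nonzero entries. Define g(X) = Σ_{i,j∈[ℓ]} (AB)_{i,j} · X^{(i-1)+ℓ(j-1)}. Then g(ω^0) = g(ω^1) = ... = g(ω^{t-1}) = 0 if and only if AB = 0. -/
open Polynomial in
theorem test_values_zero_iff_product_zero
    (F : Type*) [Field F] [DecidableEq F] (ℓ n t : ℕ) (ω : F)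
    (hω : ℓ ^ 2 ≤ orderOf ω)
    (A : Matrix (Fin ℓ) (Fin n) F) (B : Matrix (Fin n) (Fin ℓ) F)
    (ht : (Finset.univ.filter
        (fun p : Fin ℓ × Fin ℓ => (A * B) p.1 p.2 ≠ 0)).card ≤ t) :
    (∀ ν < t,
        (∑ i : Fin ℓ, ∑ j : Fin ℓ,
            C ((A * B) i j) * X ^ ((i : ℕ) + ℓ * (j : ℕ))).eval (ω ^ ν) = 0)
      ↔ A * B = 0 := by
  constructor
  · intro H
    rcases Nat.eq_zero_or_pos ℓ with hℓ | hℓ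
    · subst hℓ; ext i j; exact i.elim0
    -- exponent bound and injectivity
    have hexp_lt : ∀ p : Fin ℓ × Fin ℓ, (p.1 : ℕ) + ℓ * (p.2 : ℕ) < ℓ ^ 2 := by
      rintro ⟨i, j⟩
      calc (i : ℕ) + ℓ * (j : ℕ) < ℓ + ℓ * (j : ℕ) := by
            exact Nat.add_lt_add_right i.isLt _
        _ = ℓ * ((j : ℕ) + 1) := by ring
        _ ≤ ℓ * ℓ := Nat.mul_le_mul_left _ j.isLt
        _ = ℓ ^ 2 := (sq ℓ).symm
    have hexp_inj : ∀ p q : Fin ℓ × Fin ℓ,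
        (p.1 : ℕ) + ℓ * (p.2 : ℕ) = (q.1 : ℕ) + ℓ * (q.2 : ℕ) → p = q := by
      rintro ⟨i₁, j₁⟩ ⟨i₂, j₂⟩ h
      dsimp only at h
      have h1 : (i₁ : ℕ) = (i₂ : ℕ) := by
        have := congrArg (· % ℓ) h
        simpa [Nat.add_mul_mod_self_left, Nat.mod_eq_of_lt i₁.isLt,
          Nat.mod_eq_of_lt i₂.isLt] using this
      have h2 : (j₁ : ℕ) = (j₂ : ℕ) := by
        rw [h1] at h
        have : ℓ * (j₁ : ℕ) = ℓ * (j₂ : ℕ) := Nat.add_left_cancel h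
        exact Nat.eq_of_mul_eq_mul_left hℓ this
      exact Prod.ext (Fin.ext h1) (Fin.ext h2)
    set S := Finset.univ.filter (fun p : Fin ℓ × Fin ℓ => (A * B) p.1 p.2 ≠ 0) with hS
    set m := S.card with hm
    set e : Fin m ≃ S := S.equivFin.symm with he
    set f : Fin m → F := fun k => ω ^ (((e k : Fin ℓ × Fin ℓ).1 : ℕ) + ℓ * ((e k : Fin ℓ × Fin ℓ).2 : ℕ)) with hf
    set v : Fin m → F := fun k => (A * B) (e k : Fin ℓ × Fin ℓ).1 (e k : Fin ℓ × Fin ℓ).2 with hv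
    have hfinj : Function.Injective f := by
      intro k₁ k₂ hk
      have : (e k₁ : Fin ℓ × Fin ℓ) = (e k₂ : Fin ℓ × Fin ℓ) := by
        apply hexp_inj
        refine pow_injOn_Iio_orderOf ?_ ?_ hk
        · exact Set.mem_Iio.mpr (lt_of_lt_of_le (hexp_lt _) hω)
        · exact Set.mem_Iio.mpr (lt_of_lt_of_le (hexp_lt _) hω)
      exact e.injective (Subtype.ext this)
    have hv0 : v = 0 := by
      apply Matrix.eq_zero_of_forall_pow_sum_mul_pow_eq_zero hfinj
      intro k
      have hk : (k : ℕ) < t := lt_of_lt_of_le k.isLt ht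
      have Hk := H (k : ℕ) hk
      -- compute the evaluation
      have heval : (∑ i : Fin ℓ, ∑ j : Fin ℓ,
          C ((A * B) i j) * X ^ ((i : ℕ) + ℓ * (j : ℕ))).eval (ω ^ (k : ℕ))
          = ∑ p ∈ S, (A * B) p.1 p.2 * (ω ^ ((p.1 : ℕ) + ℓ * (p.2 : ℕ))) ^ (k : ℕ) := by
        rw [← Finset.sum_product']
        rw [Polynomial.eval_finset_sum]
        rw [Finset.sum_filter_of_ne (by intro p _ hne hc; exact hne (by simp [hc]))]
        apply Finset.sum_congr rfl
        rintro ⟨i, j⟩ _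
        rw [Polynomial.eval_mul, Polynomial.eval_C, Polynomial.eval_pow,
          Polynomial.eval_X, ← pow_mul, ← pow_mul, Nat.mul_comm]
      rw [heval] at Hk
      rw [← Hk]
      refine Finset.sum_bij' (fun a _ => ((e a : S) : Fin ℓ × Fin ℓ))
        (fun p hp => e.symm ⟨p, hp⟩) ?_ ?_ ?_ ?_ ?_
      · intro a _; exact (e a).2
      · intro p hp; exact Finset.mem_univ _
      · intro a _; simp only [Subtype.coe_eta, Equiv.symm_apply_apply]
      · intro p hp
        show ((e (e.symm ⟨p, hp⟩) : S) : Fin ℓ × Fin ℓ) = p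
        rw [Equiv.apply_symm_apply]
      · intro a _; rfl
    ext i j
    simp only [Matrix.zero_apply]
    by_cases hij : (A * B) i j = 0
    · exact hij
    · have hpf : ((i, j) : Fin ℓ × Fin ℓ) ∈ S := by simp [hS, hij]
      have hx : e (e.symm ⟨(i, j), hpf⟩) = ⟨(i, j), hpf⟩ := Equiv.apply_symm_apply e _
      have h0 := congrFun hv0 (e.symm ⟨(i, j), hpf⟩)
      simp only [hv, hx, Pi.zero_apply] at h0
      exact h0
  · intro h ν _
    simp [h]
end

section
/- Let AB = 0 for n×n Boolean matrices be encoded as a 3SUM instance as follows, with W = 2(n+1): S_1 = {i·W² + k : A_{i,k} = 1}, S_2 = {j·W - k : B_{k,j} = 1}, S_3 = {i·W² + j·W : C_{i,j} = 0}. Then there exist s_1 ∈ S_1, s_2 ∈ S_2, s_3 ∈ S_3 with s_1 + s_2 = s_3 if and only if there exist i, j, k ∈ [n] with C_{i,j} = 0, A_{i,k} = 1, and B_{k,j} = 1. -/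
lemma bmm_key (n a a' b b' c c' : ℤ)
    (ha : 1 ≤ a ∧ a ≤ n) (ha' : 1 ≤ a' ∧ a' ≤ n)
    (hb : 1 ≤ b ∧ b ≤ n) (hb' : 1 ≤ b' ∧ b' ≤ n)
    (hc : 1 ≤ c ∧ c ≤ n) (hc' : 1 ≤ c' ∧ c' ≤ n)
    (h : a * (2 * (n + 1)) ^ 2 + c + (b * (2 * (n + 1)) - c')
        = a' * (2 * (n + 1)) ^ 2 + b' * (2 * (n + 1))) :
    a = a' ∧ b = b' ∧ c = c' := by
  set W : ℤ := 2 * (n + 1) with hWdef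
  have hnW : n < W := by omega
  have hW0 : (0:ℤ) < W := by omega
  have hdvd1 : W ∣ (c - c') := ⟨(a' - a) * W + (b' - b), by linear_combination h⟩
  have hcc : c = c' := by
    have := Int.eq_zero_of_abs_lt_dvd hdvd1 (by rw [abs_lt]; omega)
    omega
  subst hcc
  have h2 : W * ((a - a') * W + (b - b')) = 0 := by linear_combination h
  have h3 : (a - a') * W + (b - b') = 0 := by
    rcases mul_eq_zero.mp h2 with h | h
    · omega
    · exact h
  have hdvd2 : W ∣ (b - b') := ⟨a' - a, by linarith [h3]⟩
  have hbb : b = b' := by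
    have := Int.eq_zero_of_abs_lt_dvd hdvd2 (by rw [abs_lt]; omega)
    omega
  subst hbb
  have : (a - a') * W = 0 := by linarith [h3]
  rcases mul_eq_zero.mp this with h | h
  · exact ⟨by omega, rfl, rfl⟩
  · omega

theorem bmm_to_threesum_reduction
    (n : ℕ) (A B C : Matrix (Fin n) (Fin n) Bool) :
    (∃ s₁ s₂ s₃ : ℤ,
      (∃ i k : Fin n, A i k = true ∧
        s₁ = ((i : ℤ) + 1) * (2 * ((n : ℤ) + 1)) ^ 2 + ((k : ℤ) + 1)) ∧
      (∃ k j : Fin n, B k j = true ∧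
        s₂ = ((j : ℤ) + 1) * (2 * ((n : ℤ) + 1)) - ((k : ℤ) + 1)) ∧
      (∃ i j : Fin n, C i j = false ∧
        s₃ = ((i : ℤ) + 1) * (2 * ((n : ℤ) + 1)) ^ 2 +
          ((j : ℤ) + 1) * (2 * ((n : ℤ) + 1))) ∧
      s₁ + s₂ = s₃)
    ↔ ∃ i j k : Fin n, C i j = false ∧ A i k = true ∧ B k j = true := by
  constructor
  · rintro ⟨s₁, s₂, s₃, ⟨i, k, hA, rfl⟩, ⟨k', j, hB, rfl⟩, ⟨i', j', hC, rfl⟩, heq⟩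
    have bi : ((i:ℤ), (i':ℤ), (j:ℤ), (j':ℤ), (k:ℤ), (k':ℤ)) = _ := rfl
    have h1 : (1:ℤ) ≤ (i:ℤ) + 1 ∧ (i:ℤ) + 1 ≤ n := ⟨by omega, by have := i.isLt; omega⟩
    have h2 : (1:ℤ) ≤ (i':ℤ) + 1 ∧ (i':ℤ) + 1 ≤ n := ⟨by omega, by have := i'.isLt; omega⟩
    have h3 : (1:ℤ) ≤ (j:ℤ) + 1 ∧ (j:ℤ) + 1 ≤ n := ⟨by omega, by have := j.isLt; omega⟩
    have h4 : (1:ℤ) ≤ (j':ℤ) + 1 ∧ (j':ℤ) + 1 ≤ n := ⟨by omega, by have := j'.isLt; omega⟩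
    have h5 : (1:ℤ) ≤ (k:ℤ) + 1 ∧ (k:ℤ) + 1 ≤ n := ⟨by omega, by have := k.isLt; omega⟩
    have h6 : (1:ℤ) ≤ (k':ℤ) + 1 ∧ (k':ℤ) + 1 ≤ n := ⟨by omega, by have := k'.isLt; omega⟩
    obtain ⟨hii, hjj, hkk⟩ := bmm_key n ((i:ℤ)+1) ((i':ℤ)+1) ((j:ℤ)+1) ((j':ℤ)+1)
      ((k:ℤ)+1) ((k':ℤ)+1) h1 h2 h3 h4 h5 h6 heq
    have hi : i = i' := Fin.ext (by omega)
    have hj : j = j' := Fin.ext (by omega)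
    have hk : k = k' := Fin.ext (by omega)
    exact ⟨i, j, k, hi ▸ hj ▸ hC, hA, hk ▸ hB⟩
  · rintro ⟨i, j, k, hC, hA, hB⟩
    exact ⟨_, _, _, ⟨i, k, hA, rfl⟩, ⟨k, j, hB, rfl⟩, ⟨i, j, hC, rfl⟩, by ring⟩
end

section
/- Let F be a field, ℓ ≥ 1, and let g(X) = Σ_{i,j∈[ℓ]} c_{i,j} · X^{(i-1)+ℓ(j-1)} be a polynomial over F. If g has at most t nonzero coefficients and ω ∈ F has order at least ℓ², then the set of pairs (i,j) with c_{i,j} ≠ 0 is uniquely determined by the values g(ω^0), g(ω^1), ..., g(ω^{2t-1}). -/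
open Polynomial in
theorem sparse_support_determined
    (F : Type*) [Field F] [DecidableEq F] (ℓ t : ℕ) (ω : F) (hω : ℓ ^ 2 ≤ orderOf ω)
    (c d : Fin ℓ → Fin ℓ → F)
    (hc : (Finset.univ.filter
        (fun p : Fin ℓ × Fin ℓ => c p.1 p.2 ≠ 0)).card ≤ t)
    (hd : (Finset.univ.filter
        (fun p : Fin ℓ × Fin ℓ => d p.1 p.2 ≠ 0)).card ≤ t)
    (hagree : ∀ ν < 2 * t,
      (∑ i : Fin ℓ, ∑ j : Fin ℓ,
          C (c i j) * X ^ ((i : ℕ) + ℓ * (j : ℕ))).eval (ω ^ ν)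
        = (∑ i : Fin ℓ, ∑ j : Fin ℓ,
            C (d i j) * X ^ ((i : ℕ) + ℓ * (j : ℕ))).eval (ω ^ ν)) :
    ∀ i j, c i j ≠ 0 ↔ d i j ≠ 0 := by
  set e : Fin ℓ × Fin ℓ → F := fun p => c p.1 p.2 - d p.1 p.2 with he
  set a : Fin ℓ × Fin ℓ → ℕ := fun p => (p.1 : ℕ) + ℓ * (p.2 : ℕ) with ha
  suffices h : ∀ p : Fin ℓ × Fin ℓ, e p = 0 by
    intro i j
    have h' := h (i, j)
    simp only [he, sub_eq_zero] at h'
    rw [h']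
  -- support of e
  set S : Finset (Fin ℓ × Fin ℓ) := Finset.univ.filter (fun p => e p ≠ 0) with hS
  have hScard : S.card ≤ 2 * t := by
    have hsub : S ⊆ (Finset.univ.filter (fun p : Fin ℓ × Fin ℓ => c p.1 p.2 ≠ 0)) ∪
        (Finset.univ.filter (fun p : Fin ℓ × Fin ℓ => d p.1 p.2 ≠ 0)) := by
      intro p hp
      simp only [hS, he, Finset.mem_filter, Finset.mem_union, Finset.mem_univ, true_and] at hp ⊢
      by_contra hcon
      push_neg at hcon
      simp [hcon.1, hcon.2] at hp
    calc S.card ≤ _ := Finset.card_le_card hsub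
      _ ≤ _ := Finset.card_union_le _ _
      _ ≤ 2 * t := by omega
  -- exponent bounds and injectivity
  have haltℓ2 : ∀ p : Fin ℓ × Fin ℓ, a p < ℓ ^ 2 := by
    rintro ⟨i, j⟩
    have hi := i.isLt
    have hj := j.isLt
    simp only [ha]
    nlinarith
  have hainj : Function.Injective a := by
    rintro ⟨i, j⟩ ⟨i', j'⟩ hpq
    have hi := i.isLt; have hi' := i'.isLt
    simp only [ha] at hpq
    have hj : (j : ℕ) = (j' : ℕ) := by
      rcases Nat.lt_trichotomy (j : ℕ) (j' : ℕ) with h | h | h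
      · nlinarith
      · exact h
      · nlinarith
    rw [show ((j:ℕ)) = (j':ℕ) from hj] at hpq
    have : (i : ℕ) = (i' : ℕ) := by omega
    exact Prod.ext (Fin.ext this) (Fin.ext hj)
  -- the points ω ^ a p are pairwise distinct
  have hxinj : ∀ p q : Fin ℓ × Fin ℓ, ω ^ a p = ω ^ a q → p = q := by
    intro p q hpq
    refine hainj (pow_injOn_Iio_orderOf ?_ ?_ hpq)
    · exact lt_of_lt_of_le (haltℓ2 p) hω
    · exact lt_of_lt_of_le (haltℓ2 q) hω
  -- the key vanishing sums
  have hsum : ∀ ν < 2 * t, ∑ p : Fin ℓ × Fin ℓ, e p * (ω ^ a p) ^ ν = 0 := by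
    intro ν hν
    have h := hagree ν hν
    simp only [eval_finset_sum, eval_mul, eval_C, eval_pow, eval_X] at h
    have h' : ∑ p : Fin ℓ × Fin ℓ, e p * (ω ^ ν) ^ a p = 0 := by
      rw [Fintype.sum_prod_type]
      simp only [he, ha, sub_mul, Finset.sum_sub_distrib]
      rw [sub_eq_zero]
      exact h
    calc ∑ p : Fin ℓ × Fin ℓ, e p * (ω ^ a p) ^ ν
        = ∑ p : Fin ℓ × Fin ℓ, e p * (ω ^ ν) ^ a p := by
          refine Finset.sum_congr rfl fun p _ => ?_
          rw [← pow_mul, ← pow_mul, Nat.mul_comm]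
      _ = 0 := h'
  -- reduce to support
  have hsumS : ∀ ν < 2 * t, ∑ p ∈ S, e p * (ω ^ a p) ^ ν = 0 := by
    intro ν hν
    rw [← hsum ν hν]
    refine Finset.sum_subset (Finset.subset_univ S) ?_
    intro p _ hp
    simp only [hS, Finset.mem_filter, Finset.mem_univ, true_and, not_not] at hp
    rw [hp, zero_mul]
  -- Vandermonde argument
  intro p
  by_contra hp0
  have hpS : p ∈ S := by simp [hS, hp0]
  have hfinj : Function.Injective
      (fun k : Fin S.card => ω ^ a (S.equivFin.symm k : Fin ℓ × Fin ℓ)) := by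
    intro k k' hkk'
    have := hxinj _ _ hkk'
    exact (Equiv.injective S.equivFin.symm) (Subtype.ext this)
  have hzero : (fun k : Fin S.card => e (S.equivFin.symm k : Fin ℓ × Fin ℓ)) = 0 := by
    apply Matrix.eq_zero_of_forall_pow_sum_mul_pow_eq_zero hfinj
    intro i
    have hi : (i : ℕ) < 2 * t := lt_of_lt_of_le i.isLt hScard
    have := hsumS i hi
    rw [← this]
    rw [← Finset.sum_coe_sort S (fun p => e p * (ω ^ a p) ^ (i : ℕ))]
    exact Fintype.sum_equiv S.equivFin.symm _ _ (fun k => rfl)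
  have hk := congrFun hzero (S.equivFin ⟨p, hpS⟩)
  simp only [Equiv.symm_apply_apply, Pi.zero_apply] at hk
  exact hp0 hk
end
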